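/- Tropical Kirchhoff formula, contraction part: For a loopless matroid M, element e, and weighting x : E → ℝ, the minimum weight of a basis of the contraction M/e equals mwb(M,x) - min{x(e), μ_e(x)}, where mwb(M,x) is the minimum weight of a basis of M. -/

import Mathlib

open Matroid Set

variable {α : Type*}

/-- A circuit of a matroid: a minimal dependent set. -/
def Matroid.PaperIsCircuit (M : Matroid α) (C : Set α) : Prop :=
  M.Dep C ∧ ∀ ⦃D⦄, D ⊂ C → M.Indep D

/-- Looplessness in the sense of the paper: no element is a loop
(every singleton of the ground set is independent) and no element is a
coloop (no element lies in all bases). -/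
def Matroid.PaperLoopless (M : Matroid α) : Prop :=
  ∀ e ∈ M.E, M.Indep {e} ∧ ∃ B, M.IsBase B ∧ e ∉ B

/-- The weight `x(B)` of a set of ground elements. -/
noncomputable def setWeight (x : α → ℝ) (B : Set α) : ℝ := ∑ᶠ e ∈ B, x e

/-- The min-max weight `μ_e(x)`: the minimum over circuits `C` containing `e`
of the maximum weight of an element of `C - e`. -/
noncomputable def muWeight (M : Matroid α) (x : α → ℝ) (e : α) : ℝ :=
  sInf {w | ∃ C, M.PaperIsCircuit C ∧ e ∈ C ∧ w = sSup (x '' (C \ {e}))}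

/-- The bottleneck weight `b_e(x) = min {x(e), μ_e(x)}`. -/
noncomputable def bottleneck (M : Matroid α) (x : α → ℝ) (e : α) : ℝ :=
  min (x e) (muWeight M x e)

/-- The minimum weight of a basis of `M`. -/
noncomputable def mwb (M : Matroid α) (x : α → ℝ) : ℝ :=
  sInf {w | ∃ B, M.IsBase B ∧ w = setWeight x B}

/-- `B` is an `x`-optimal basis of `M`. -/
def IsOptimalBase (M : Matroid α) (x : α → ℝ) (B : Set α) : Prop :=
  M.IsBase B ∧ ∀ B', M.IsBase B' → setWeight x B ≤ setWeight x B'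

/-- Deletion of a single element. -/
noncomputable def Matroid.del (M : Matroid α) (e : α) : Matroid α :=
  M ↾ (M.E \ {e})

/-- Contraction of a single element, defined by duality: `M/e = (M✶ \ e)✶`. -/
noncomputable def Matroid.con (M : Matroid α) (e : α) : Matroid α :=
  ((M✶ ↾ (M.E \ {e}))✶)

/-!
Bases of `M/e` are the sets `B - e` for bases `B ∋ e`, so the claim is that the lightest base
through `e` weighs `mwb(M,x) + x(e) - b_e(x)`. An optimal base `B` either contains `e`, or
exchanging the heaviest element `f` of the fundamental circuit of `e` in `B` (so `x(f) ≥ μ_e(x)`)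
for `e` gives a base through `e` of weight at most `mwb(M,x) + x(e) - μ_e(x)`. Conversely, for a
base `B ∋ e` and a circuit `C ∋ e`, some `f ∈ C - e` outside the closure of `B - e` can replace
`e`, so `mwb(M,x) ≤ x(B) - x(e) + max x(C - e)`.
-/

section setWeight

variable {x : α → ℝ} {e : α} {B : Set α}

lemma setWeight_insert (hB : B.Finite) (heB : e ∉ B) :
    setWeight x (insert e B) = x e + setWeight x B :=
  finsum_mem_insert x heB hB

lemma setWeight_eq_add_setWeight_sdiff (hB : B.Finite) (heB : e ∈ B) :
    setWeight x B = x e + setWeight x (B \ {e}) := by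
  rw [← setWeight_insert hB.sdiff (by simp), insert_sdiff_singleton,
    insert_eq_of_mem heB]

end setWeight

namespace Matroid

variable {M : Matroid α} {x : α → ℝ} {e f : α} {B C : Set α}

lemma paperIsCircuit_iff : M.PaperIsCircuit C ↔ M.IsCircuit C :=
  isCircuit_iff_forall_ssubset.symm

lemma con_eq_contract (M : Matroid α) (e : α) : M.con e = M ／ {e} := rfl

lemma IsNonloop.con_isBase_iff (he : M.IsNonloop e) :
    (M.con e).IsBase B ↔ M.IsBase (insert e B) ∧ e ∉ B := by
  rw [con_eq_contract, he.indep.contract_isBase_iff, union_singleton, disjoint_singleton_right]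

/-- Since `e ∉ cl(B)` but `e ∈ cl(C - e)`, some `f ∈ C - e` lies outside `cl(B)`. -/
lemma IsBase.exists_insert_isBase_of_isCircuit (hB : M.IsBase (insert e B)) (heB : e ∉ B)
    (hC : M.IsCircuit C) (heC : e ∈ C) : ∃ f ∈ C \ {e}, f ∉ B ∧ M.IsBase (insert f B) := by
  have hBi : M.Indep B := hB.indep.subset (subset_insert e B)
  have hecl : e ∉ M.closure B := ((hBi.insert_indep_iff_of_notMem heB).1 hB.indep).2
  obtain ⟨f, hfC, hfcl⟩ := not_subset.1 fun h : C \ {e} ⊆ M.closure B =>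
    hecl (M.closure_subset_closure_of_subset_closure h (hC.mem_closure_sdiff_singleton_of_mem heC))
  have hfB : f ∉ B := fun h => hfcl (M.subset_closure B hBi.subset_ground h)
  have hfi : M.Indep (insert f B) :=
    (hBi.insert_indep_iff_of_notMem hfB).2 ⟨hC.subset_ground hfC.1, hfcl⟩
  exact ⟨f, hfC, hfB, insert_isBase_of_insert_indep heB hfB hB hfi⟩

lemma IsBase.insert_sdiff_isBase_of_mem_fundCircuit (hB : M.IsBase B) (he : e ∈ M.E)
    (heB : e ∉ B) (hf : f ∈ M.fundCircuit e B \ {e}) : M.IsBase (insert e (B \ {f})) := by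
  have hi := (hB.indep.mem_fundCircuit_iff (hB.closure_eq ▸ he) heB).1 hf.1
  rw [← insert_sdiff_singleton_comm (Ne.symm hf.2)] at hi
  exact hB.exchange_isBase_of_indep heB hi

lemma IsNonloop.sdiff_singleton_nonempty_of_isCircuit (he : M.IsNonloop e) (hC : M.IsCircuit C)
    (heC : e ∈ C) : (C \ {e}).Nonempty := by
  by_contra h
  rw [not_nonempty_iff_eq_empty, sdiff_eq_empty, subset_singleton_iff_eq] at h
  obtain rfl | rfl := h
  · exact hC.nonempty.ne_empty rfl
  · exact he.not_isLoop (singleton_isCircuit.1 hC)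

end Matroid

open Matroid

section mwb

variable {M : Matroid α} {x : α → ℝ} {B : Set α}

lemma IsOptimalBase.mwb_eq (hB : IsOptimalBase M x B) : mwb M x = setWeight x B := by
  refine IsLeast.csInf_eq ⟨⟨B, hB.1, rfl⟩, ?_⟩
  rintro _ ⟨B', hB', rfl⟩
  exact hB.2 B' hB'

lemma exists_isOptimalBase (M : Matroid α) [M.Finite] (x : α → ℝ) :
    ∃ B, IsOptimalBase M x B := by
  obtain ⟨B, hB, hmin⟩ := exists_min_image {B | M.IsBase B} (setWeight x)
    (M.ground_finite.finite_subsets.subset fun B hB => hB.subset_ground) M.exists_isBase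
  exact ⟨B, hB, hmin⟩

lemma mwb_le [M.Finite] (hB : M.IsBase B) : mwb M x ≤ setWeight x B := by
  obtain ⟨B₀, hB₀⟩ := exists_isOptimalBase M x
  exact hB₀.mwb_eq ▸ hB₀.2 B hB

end mwb

section muWeight

variable {M : Matroid α} {x : α → ℝ} {e : α} {C : Set α}

lemma le_muWeight {a : ℝ} (he : ∃ C, M.IsCircuit C ∧ e ∈ C)
    (h : ∀ C, M.IsCircuit C → e ∈ C → a ≤ sSup (x '' (C \ {e}))) : a ≤ muWeight M x e := by
  obtain ⟨C, hC, heC⟩ := he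
  refine le_csInf ⟨_, C, paperIsCircuit_iff.2 hC, heC, rfl⟩ ?_
  rintro _ ⟨C, hC, heC, rfl⟩
  exact h C (paperIsCircuit_iff.1 hC) heC

lemma muWeight_le [M.Finite] (hC : M.IsCircuit C) (heC : e ∈ C) :
    muWeight M x e ≤ sSup (x '' (C \ {e})) := by
  refine csInf_le (Finite.bddBelow ?_) ⟨C, paperIsCircuit_iff.2 hC, heC, rfl⟩
  refine (M.ground_finite.finite_subsets.image fun C => sSup (x '' (C \ {e}))).subset ?_
  rintro _ ⟨C, hC, -, rfl⟩
  exact ⟨C, hC.1.subset_ground, rfl⟩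

end muWeight

section bottleneck

variable {M : Matroid α} {x : α → ℝ} {e : α} {B : Set α}

lemma mwb_sub_bottleneck_le [M.Finite] (hne : M.IsNonloop e) (hnc : ¬ M.IsColoop e)
    (hB : (M.con e).IsBase B) : mwb M x - bottleneck M x e ≤ setWeight x B := by
  obtain ⟨hBe, heB⟩ := hne.con_isBase_iff.1 hB
  have hBfin : B.Finite := (M.set_finite _ hBe.subset_ground).subset (subset_insert e B)
  have h_e : mwb M x ≤ setWeight x B + x e := by
    have := mwb_le (x := x) hBe
    rw [setWeight_insert hBfin heB] at this
    linarith
  have h_μ : mwb M x - setWeight x B ≤ muWeight M x e := by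
    refine le_muWeight (exists_mem_isCircuit_of_not_isColoop hne.mem_ground hnc)
      fun C hC heC => ?_
    obtain ⟨f, hf, hfB, hfBase⟩ := hBe.exists_insert_isBase_of_isCircuit heB hC heC
    have h_f := mwb_le (x := x) hfBase
    rw [setWeight_insert hBfin hfB] at h_f
    have h_max : x f ≤ sSup (x '' (C \ {e})) :=
      le_csSup ((M.set_finite C hC.subset_ground).sdiff.image x).bddAbove (mem_image_of_mem x hf)
    linarith
  rw [bottleneck, sub_le_iff_le_add, ← min_add_add_left, le_min_iff]
  constructor <;> linarith

lemma exists_con_isBase_setWeight_le [M.Finite] (hne : M.IsNonloop e) :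
    ∃ B, (M.con e).IsBase B ∧ setWeight x B ≤ mwb M x - bottleneck M x e := by
  obtain ⟨B, hBopt⟩ := exists_isOptimalBase M x
  have hBfin : B.Finite := M.set_finite B hBopt.1.subset_ground
  rw [hBopt.mwb_eq, bottleneck]
  by_cases heB : e ∈ B
  · refine ⟨B \ {e}, hne.con_isBase_iff.2 ⟨?_, fun h => h.2 rfl⟩, ?_⟩
    · rw [insert_sdiff_singleton, insert_eq_of_mem heB]
      exact hBopt.1
    · linarith [setWeight_eq_add_setWeight_sdiff (x := x) hBfin heB,
        min_le_left (x e) (muWeight M x e)]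
  set C := M.fundCircuit e B
  have hC : M.IsCircuit C := hBopt.1.fundCircuit_isCircuit hne.mem_ground heB
  have hCe := hne.sdiff_singleton_nonempty_of_isCircuit hC (mem_fundCircuit M e B)
  obtain ⟨f, hf, hf_max⟩ :=
    exists_max_image (C \ {e}) x (M.set_finite C hC.subset_ground).sdiff hCe
  have hfB : f ∈ B := (fundCircuit_subset_insert M e B hf.1).resolve_left hf.2
  refine ⟨B \ {f}, hne.con_isBase_iff.2
    ⟨hBopt.1.insert_sdiff_isBase_of_mem_fundCircuit hne.mem_ground heB hf, fun h => heB h.1⟩, ?_⟩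
  have hμ : muWeight M x e ≤ x f :=
    (muWeight_le hC (mem_fundCircuit M e B)).trans
      (csSup_le (hCe.image x) (by rintro _ ⟨g, hg, rfl⟩; exact hf_max g hg))
  linarith [setWeight_eq_add_setWeight_sdiff (x := x) hBfin hfB,
    min_le_right (x e) (muWeight M x e)]

end bottleneck

/-- tropical Kirchhoff formula, contraction part. -/
theorem stmt9 (M : Matroid α) [M.Finite] (hM : M.PaperLoopless)
    (x : α → ℝ) {e : α} (he : e ∈ M.E) :
    mwb (M.con e) x = mwb M x - min (x e) (muWeight M x e) := by
  obtain ⟨he_indep, B₀, hB₀, heB₀⟩ := hM e he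
  have hne : M.IsNonloop e := indep_singleton.1 he_indep
  have hnc : ¬ M.IsColoop e := fun h => heB₀ (h.mem_of_isBase hB₀)
  obtain ⟨B, hB, hB_le⟩ := exists_con_isBase_setWeight_le (x := x) hne
  have hopt : IsOptimalBase (M.con e) x B :=
    ⟨hB, fun B' hB' => hB_le.trans (mwb_sub_bottleneck_le hne hnc hB')⟩
  exact hopt.mwb_eq.trans (le_antisymm hB_le (mwb_sub_bottleneck_le hne hnc hB))
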